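/- arXiv:2010.01420 — 3 statements merged into one kernel-verified Lean document; each statement's English description precedes it below -/
import Mathlib

section
/- Let M be a set of m ≥ 2 items and N a finite ordered set of bidders with valuations; fix a bidder i whose valuation v_i is subadditive, a set S_i* ⊆ M, and ψ > 0 with ψ ≥ v_i(S_i*), and assume that bidder i satisfies the α-price guarantee on S_i* for some real α ≥ 1. Then for every fixed assignment r_{−i} of rounds in {1, …, β+1} to the bidders other than i, in BinarySearchMechanism(N, M, ψ): E_{r*, r_i}[Utility_i + Rev(S_i*) | r_{−i}] ≥ (1/(2·α·(β+1)²))·v_i(S_i*) − ψ/m², where Utility_i and Rev refer to the FixedPriceAuction that produced the final allocation (with Utility_i = 0 if bidder i does not participate in it). -/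
open Finset

variable {ι : Type} [Fintype ι] [DecidableEq ι] {B : Type} [DecidableEq B]

/-- Sum of the prices of the items in `S`. -/
def priceOf (p : ι → ℝ) (S : Finset ι) : ℝ := ∑ e ∈ S, p e

/-- A (normalized, monotone) valuation. -/
def IsValuation (v : Finset ι → ℝ) : Prop :=
  v ∅ = 0 ∧ ∀ S T : Finset ι, S ⊆ T → v S ≤ v T

/-- A subadditive set function. -/
def SubadditiveVal (v : Finset ι → ℝ) : Prop :=
  ∀ S T : Finset ι, v (S ∪ T) ≤ v S + v T

/-- `D` is a demand oracle for valuation `v` at prices `p`: on any set `R` of available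
items it returns a subset of `R` maximizing utility. -/
def IsDemandOracle (v : Finset ι → ℝ) (p : ι → ℝ) (D : Finset ι → Finset ι) : Prop :=
  ∀ R : Finset ι, D R ⊆ R ∧ ∀ T ⊆ R, v T - priceOf p T ≤ v (D R) - priceOf p (D R)

/-- The bundle received by bidder `i` in the fixed price auction processing the ordered
list `L` of bidders with available items `R`, where bidder `j` uses demand oracle `Dem j`. -/
def FPAalloc (Dem : B → Finset ι → Finset ι) : List B → Finset ι → B → Finset ι
  | [], _, _ => ∅
  | j :: L, R, i => if i = j then Dem j R else FPAalloc Dem L (R \ Dem j R) i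

/-- The set of items allocated (to some bidder) in the fixed price auction. -/
def FPAsold (Dem : B → Finset ι → Finset ι) : List B → Finset ι → Finset ι
  | [], _ => ∅
  | j :: L, R => Dem j R ∪ FPAsold Dem L (R \ Dem j R)

/-- The candidate price set `B = {0} ∪ {2^(j-K)·ψ : j = 0,…,K-1}` where `K = 3⌈log₂ m⌉`. -/
def candB (m : ℕ) (ψ : ℝ) : Set ℝ :=
  insert 0 {x : ℝ | ∃ j < 3 * Nat.clog 2 m, x = 2 ^ j * ψ / 2 ^ (3 * Nat.clog 2 m)}

/-- Bidder with valuation `v` satisfies the `α`-price guarantee on `U`. -/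
def PriceGuarantee (v : Finset ι → ℝ) (U : Finset ι) (α : ℝ) : Prop :=
  ∃ (lam : Finset ι → ℝ) (q : ι → ℝ),
    (∀ S, 0 ≤ lam S) ∧ (∑ S ∈ U.powerset, lam S = 1) ∧ (∀ e ∈ U, 0 ≤ q e) ∧
    ∀ T ⊆ U, (1 / α) * v U - priceOf q T ≤
      ∑ S ∈ U.powerset, lam S * (v (S \ T) - priceOf q S)

/-- The group of bidders participating in round `ℓ` (in the order of `N`). -/
def BSMgroup (N : List B) (r : B → ℕ) (ℓ : ℕ) : List B := N.filter fun i => r i = ℓ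

/-- The offset (into the sorted vector `b` of `2^β` candidate prices) of the block of
remaining candidate prices of each item at the beginning of round `ℓ` (rounds are
`0`-indexed: the binary search rounds are `0,…,β-1` and the final round is `β`). -/
def BSMoff (Dem : B → (ι → ℝ) → Finset ι → Finset ι) (N : List B) (r : B → ℕ)
    (b : ℕ → ℝ) (β : ℕ) : ℕ → ι → ℕ
  | 0, _ => 0
  | ℓ + 1, e =>
    if e ∈ FPAsold
        (fun i => Dem i fun e' => b (BSMoff Dem N r b β ℓ e' + 2 ^ (β - ℓ - 1)))
        (BSMgroup N r ℓ) Finset.univ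
    then BSMoff Dem N r b β ℓ e + 2 ^ (β - ℓ - 1)
    else BSMoff Dem N r b β ℓ e

/-- The price vector used in round `ℓ` of the binary search mechanism: for `ℓ < β` the
middle entry of the remaining block of candidate prices, and for the final round `β`
the unique remaining candidate price. -/
def BSMprice (Dem : B → (ι → ℝ) → Finset ι → Finset ι) (N : List B) (r : B → ℕ)
    (b : ℕ → ℝ) (β ℓ : ℕ) : ι → ℝ :=
  fun e =>
    if ℓ < β then b (BSMoff Dem N r b β ℓ e + 2 ^ (β - ℓ - 1))
    else b (BSMoff Dem N r b β β e)

/-- The bundle received by bidder `i` in the final allocation of the binary search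
mechanism when the final allocation round is `ℓstar`. -/
def BSMfinalAlloc (Dem : B → (ι → ℝ) → Finset ι → Finset ι) (N : List B) (r : B → ℕ)
    (b : ℕ → ℝ) (β ℓstar : ℕ) (i : B) : Finset ι :=
  FPAalloc (fun j => Dem j (BSMprice Dem N r b β ℓstar)) (BSMgroup N r ℓstar) Finset.univ i

/-- The welfare of the final allocation of the binary search mechanism. -/
def BSMwelfare (v : B → Finset ι → ℝ) (Dem : B → (ι → ℝ) → Finset ι → Finset ι)
    (N : List B) (r : B → ℕ) (b : ℕ → ℝ) (β ℓstar : ℕ) : ℝ :=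
  ((BSMgroup N r ℓstar).map fun i => v i (BSMfinalAlloc Dem N r b β ℓstar i)).sum

/-- The set of items sold in the fixed price auction of round `ℓ`. -/
def BSMsold (Dem : B → (ι → ℝ) → Finset ι → Finset ι) (N : List B) (r : B → ℕ)
    (b : ℕ → ℝ) (β ℓ : ℕ) : Finset ι :=
  FPAsold (fun j => Dem j (BSMprice Dem N r b β ℓ)) (BSMgroup N r ℓ) Finset.univ

/-- The revenue obtained from the items of `S` in the final allocation (round `ℓstar`). -/
def BSMrev (Dem : B → (ι → ℝ) → Finset ι → Finset ι) (N : List B) (r : B → ℕ)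
    (b : ℕ → ℝ) (β : ℕ) (S : Finset ι) (ℓstar : ℕ) : ℝ :=
  priceOf (BSMprice Dem N r b β ℓstar) (S ∩ BSMsold Dem N r b β ℓstar)

/-- The utility of bidder `i` in the final allocation (zero if `i` does not take part in
the fixed price auction that produced the final allocation). -/
def BSMutility (v : B → Finset ι → ℝ) (Dem : B → (ι → ℝ) → Finset ι → Finset ι)
    (N : List B) (r : B → ℕ) (b : ℕ → ℝ) (β : ℕ) (i : B) (ℓstar : ℕ) : ℝ :=
  if r i = ℓstar then
    v i (BSMfinalAlloc Dem N r b β ℓstar i)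
      - priceOf (BSMprice Dem N r b β ℓstar) (BSMfinalAlloc Dem N r b β ℓstar i)
  else 0


/-!
Round the prices `q` of the price guarantee down to candidate prices `q̄`, and take as reference
the run in which bidder `i` draws the last round; rounds before `ℓ` do not depend on whether `i`
draws `ℓ` or the last round. The binary search on the candidate prices gives every item `e` of
`S*` a critical round `ℓ`: either the reference run sells `e` in round `ℓ` at a price `≥ q̄ e`
(these items form `T`, and the reference run earns `q̄(T)` from them), or `e` is still unsold
when `i` is served in round `ℓ` of the run where `i` draws `ℓ`, at a price `≤ q̄ e`. Splitting
`S \ T` by critical rounds and using subadditivity, the utilities on the diagonal `r_i = r*` add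
up to at least `v(S*)/α - q(T)`. Either `q̄(T) ≥ v(S*)/(2α)`, or no price of `T` exceeds `ψ`
and `q(T) ≤ 2 q̄(T) + m ψ / 2^K ≤ 2 q̄(T) + ψ/m²`; in both cases the diagonal and the last row
of the `(β+1)²` equally likely pairs `(r_i, r*)` contribute `v(S*)/(2α) - ψ/m²`.
-/

section

-- Fresh item and bidder types, so that each lemma takes only the instances it uses.
variable {ι B : Type}

theorem le_utility_add_revenue {V ψ α ε util rev : ℝ} {T : Finset ι} {q q' : ι → ℝ}
    (hα : 1 ≤ α) (hV : 0 ≤ V) (hVψ : V ≤ ψ) (hε : 0 ≤ ε)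
    (hq' : ∀ e ∈ T, 0 ≤ q' e ∧ (q e ≤ 2 * q' e + ε ∨ ψ / 2 ≤ q' e))
    (hutil0 : 0 ≤ util) (hutil : 1 / α * V - priceOf q T ≤ util)
    (hrev : priceOf q' T ≤ rev) :
    1 / (2 * α) * V - T.card * ε ≤ util + rev := by
  have hcard : 0 ≤ T.card * ε := by positivity
  -- Unless `q'(T)` alone pays for the bound, no item of `T` is rounded to `ψ / 2`.
  by_cases hbig : 1 / (2 * α) * V ≤ priceOf q' T
  · linarith
  have hsmall : ∀ e ∈ T, q e ≤ 2 * q' e + ε := by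
    intro e he
    refine (hq' e he).2.resolve_right fun hhalf => hbig ?_
    have hαV : 1 / (2 * α) * V ≤ ψ / 2 := by
      rw [div_mul_eq_mul_div, one_mul, div_le_div_iff₀ (by positivity) two_pos]
      nlinarith
    exact hαV.trans (hhalf.trans (single_le_sum (fun e he => (hq' e he).1) he))
  have hqT : priceOf q T ≤ 2 * priceOf q' T + T.card * ε := by
    unfold priceOf
    calc ∑ e ∈ T, q e ≤ ∑ e ∈ T, (2 * q' e + ε) := sum_le_sum hsmall
      _ = 2 * ∑ e ∈ T, q' e + T.card * ε := by
        rw [sum_add_distrib, ← mul_sum, sum_const, nsmul_eq_mul]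
  have hsplit : 1 / α * V = 2 * (1 / (2 * α) * V) := by
    field_simp
  linarith

theorem sum_diag_add_sum_row_le {κ : Type} [Fintype κ] {f g : κ → κ → ℝ}
    (hf : ∀ i j, 0 ≤ f i j) (hg : ∀ i j, 0 ≤ g i j) (i₁ : κ) :
    ∑ i, f i i + ∑ j, g i₁ j ≤ ∑ i, ∑ j, (f i j + g i j) := by
  simp only [sum_add_distrib]
  gcongr ?_ + ?_
  · exact sum_le_sum fun i _ => single_le_sum (fun j _ => hf i j) (mem_univ i)
  · exact single_le_sum (f := fun i => ∑ j, g i j)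
      (fun i _ => sum_nonneg fun j _ => hg i j) (mem_univ i₁)

theorem one_div_mul_sub_le_inv_mul {a c V δ G : ℝ} (hc : 1 ≤ c) (hδ : 0 ≤ δ)
    (h : 1 / a * V - δ ≤ G) : 1 / (a * c) * V - δ ≤ c⁻¹ * G := by
  have hc0 : 0 ≤ c⁻¹ := inv_nonneg.2 (zero_le_one.trans hc)
  have hδc : c⁻¹ * δ ≤ δ := mul_le_of_le_one_left hδ (inv_le_one_of_one_le₀ hc)
  have hsplit : 1 / (a * c) * V = c⁻¹ * (1 / a * V) := by ring
  rw [hsplit]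
  nlinarith

theorem exists_mem_candB_round_down {m : ℕ} {ψ x : ℝ} (hm : 2 ≤ m) (hψ : 0 < ψ)
    (hx : 0 ≤ x) :
    ∃ y ∈ candB m ψ, 0 ≤ y ∧ y ≤ x ∧
      (x ≤ 2 * y + ψ / 2 ^ (3 * Nat.clog 2 m) ∨ ψ / 2 ≤ y) := by
  set K := 3 * Nat.clog 2 m
  have hK : 1 ≤ K := by have := Nat.clog_pos one_lt_two hm; omega
  set ε := ψ / 2 ^ K with hεdef
  have hε : 0 < ε := by positivity
  have hcand : ∀ j < K, 2 ^ j * ε ∈ candB m ψ :=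
    fun j hj => Set.mem_insert_of_mem _ ⟨j, hj, by rw [hεdef, mul_div_assoc]⟩
  have hhalf : 2 ^ (K - 1) * ε = ψ / 2 := by
    rw [hεdef, show K = K - 1 + 1 by omega, pow_succ]
    field_simp
    simp
  rcases lt_or_ge x ε with hxε | hεx
  · exact ⟨0, Set.mem_insert _ _, le_rfl, hx, Or.inl (by linarith)⟩
  rcases le_or_gt (ψ / 2) x with hψx | hxψ
  · exact ⟨ψ / 2, hhalf ▸ hcand (K - 1) (by omega), by positivity, hψx, Or.inr le_rfl⟩
  obtain ⟨n, hn, hn1⟩ := exists_nat_pow_near ((one_le_div hε).2 hεx) one_lt_two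
  rw [le_div_iff₀ hε] at hn
  rw [div_lt_iff₀ hε, pow_succ] at hn1
  have hnK : n < K - 1 :=
    (pow_lt_pow_iff_right₀ one_lt_two).1 (lt_of_mul_lt_mul_right (by linarith) hε.le)
  exact ⟨2 ^ n * ε, hcand n (by omega), by positivity, hn, Or.inl (by linarith)⟩

theorem natCast_mul_div_two_pow_clog_le (m : ℕ) {ψ : ℝ} (hψ : 0 ≤ ψ) :
    m * (ψ / 2 ^ (3 * Nat.clog 2 m)) ≤ ψ / (m : ℝ) ^ 2 := by
  rcases Nat.eq_zero_or_pos m with rfl | hm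
  · simp
  have hm3 : (m : ℝ) ^ 3 ≤ 2 ^ (3 * Nat.clog 2 m) := by
    rw [mul_comm, pow_mul]
    exact_mod_cast Nat.pow_le_pow_left (Nat.le_pow_clog one_lt_two m) 3
  calc m * (ψ / 2 ^ (3 * Nat.clog 2 m)) ≤ m * (ψ / (m : ℝ) ^ 3) := by gcongr
    _ = ψ / (m : ℝ) ^ 2 := by field_simp

variable [DecidableEq ι]

theorem SubadditiveVal.le_sum_biUnion {κ : Type} [DecidableEq κ] {v : Finset ι → ℝ}
    (hsub : SubadditiveVal v) (h0 : v ∅ = 0) (s : Finset κ) (f : κ → Finset ι) :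
    v (s.biUnion f) ≤ ∑ k ∈ s, v (f k) := by
  induction s using Finset.induction_on with
  | empty => simp [h0]
  | insert k s hk ih =>
    rw [biUnion_insert, sum_insert hk]
    linarith [hsub (f k) (s.biUnion f)]

theorem SubadditiveVal.le_sum_fiberwise {κ : Type} [Fintype κ] [DecidableEq κ]
    {v : Finset ι → ℝ} (hsub : SubadditiveVal v) (h0 : v ∅ = 0) (Y : Finset ι)
    (c : ι → κ) :
    v Y ≤ ∑ k, v (Y.filter (c · = k)) := by
  conv_lhs =>
    rw [← biUnion_filter_eq_of_maps_to (s := Y) (t := univ) (f := c) fun _ _ => mem_univ _]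
  exact hsub.le_sum_biUnion h0 _ _

theorem PriceGuarantee.exists_prices {v : Finset ι → ℝ} {U : Finset ι} {α : ℝ}
    (hg : PriceGuarantee v U α) (h0 : v ∅ = 0) (hsub : SubadditiveVal v) :
    ∃ q : ι → ℝ, (∀ e ∈ U, 0 ≤ q e) ∧
      ∀ T ⊆ U, ∀ {κ : Type} [Fintype κ] [DecidableEq κ] (c : ι → κ) (u : κ → ℝ),
        (∀ k, ∀ X ⊆ U \ T, (∀ e ∈ X, c e = k) → v X - priceOf q X ≤ u k) →
          1 / α * v U - priceOf q T ≤ ∑ k, u k := by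
  obtain ⟨lam, q, hlam0, hlam1, hq0, hkey⟩ := hg
  refine ⟨q, hq0, fun T hT κ _ _ c u hu => ?_⟩
  have hfiber : ∀ S ∈ U.powerset, v (S \ T) - priceOf q S ≤ ∑ k, u k := by
    intro S hS
    have hSU := mem_powerset.1 hS
    have hq : priceOf q (S \ T) ≤ priceOf q S :=
      sum_le_sum_of_subset_of_nonneg sdiff_subset fun e he _ => hq0 e (hSU he)
    calc v (S \ T) - priceOf q S
        ≤ ∑ k, (v ((S \ T).filter (c · = k)) - priceOf q ((S \ T).filter (c · = k))) := by
          rw [sum_sub_distrib]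
          unfold priceOf at hq ⊢
          rw [sum_fiberwise]
          linarith [hsub.le_sum_fiberwise h0 (S \ T) c]
      _ ≤ ∑ k, u k := sum_le_sum fun k _ =>
          hu k _ ((filter_subset _ _).trans (sdiff_subset_sdiff hSU le_rfl))
            fun e he => (mem_filter.1 he).2
  calc 1 / α * v U - priceOf q T
      ≤ ∑ S ∈ U.powerset, lam S * (v (S \ T) - priceOf q S) := hkey T hT
    _ ≤ ∑ S ∈ U.powerset, lam S * ∑ k, u k :=
        sum_le_sum fun S hS => mul_le_mul_of_nonneg_left (hfiber S hS) (hlam0 S)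
    _ = ∑ k, u k := by rw [← sum_mul, hlam1, one_mul]

section FixedPriceAuction

variable [DecidableEq B]

/-- The items still available when bidder `i` is served; all unsold items if `i ∉ L`. -/
def FPAavail (Dem : B → Finset ι → Finset ι) : List B → Finset ι → B → Finset ι
  | [], R, _ => R
  | j :: L, R, i => if i = j then R else FPAavail Dem L (R \ Dem j R) i

variable (Dem : B → Finset ι → Finset ι) (i : B)

theorem FPAalloc_eq_of_mem : ∀ {L : List B} {R : Finset ι}, i ∈ L →
    FPAalloc Dem L R i = Dem i (FPAavail Dem L R i)
  | j :: L, R, h => by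
    by_cases hij : i = j
    · simp [FPAalloc, FPAavail, hij]
    · simp only [FPAalloc, FPAavail, if_neg hij]
      exact FPAalloc_eq_of_mem (List.mem_of_ne_of_mem hij h)

theorem sdiff_FPAavail_subset_FPAsold :
    ∀ (L : List B) (R : Finset ι), R \ FPAavail Dem L R i ⊆ FPAsold Dem L R
  | [], R => by simp [FPAavail]
  | j :: L, R => by
    by_cases hij : i = j
    · subst hij; simp [FPAavail]
    simp only [FPAavail, FPAsold, if_neg hij]
    intro e he
    by_cases heD : e ∈ Dem j R
    · exact mem_union_left _ heD
    · refine mem_union_right _ (sdiff_FPAavail_subset_FPAsold L _ ?_)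
      simp_all

theorem sdiff_FPAavail_subset_FPAsold_filter :
    ∀ (L : List B) (R : Finset ι), R \ FPAavail Dem L R i ⊆ FPAsold Dem (L.filter (· ≠ i)) R
  | [], R => by simp [FPAavail]
  | j :: L, R => by
    by_cases hij : i = j
    · subst hij; simp [FPAavail]
    rw [List.filter_cons_of_pos (by simpa using Ne.symm hij)]
    simp only [FPAavail, FPAsold, if_neg hij]
    intro e he
    by_cases heD : e ∈ Dem j R
    · exact mem_union_left _ heD
    · refine mem_union_right _ (sdiff_FPAavail_subset_FPAsold_filter L _ ?_)
      simp_all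

end FixedPriceAuction

section BinarySearchMechanism

def roundsWith [DecidableEq B] {β : ℕ} (rminus : B → Fin (β + 1)) (i : B) (k : Fin (β + 1)) :
    B → ℕ :=
  fun j => (Function.update rminus i k j : ℕ)

variable [Fintype ι] (Dem : B → (ι → ℝ) → Finset ι → Finset ι) (N : List B) (b : ℕ → ℝ)
  (β : ℕ)

theorem BSMoff_add_two_pow_le (r : B → ℕ) (e : ι) :
    ∀ ℓ ≤ β, BSMoff Dem N r b β ℓ e + 2 ^ (β - ℓ) ≤ 2 ^ β
  | 0, _ => by simp [BSMoff]
  | ℓ + 1, h => by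
    have ih := BSMoff_add_two_pow_le r e ℓ (by omega)
    have hpow : 2 ^ (β - ℓ) = 2 ^ (β - (ℓ + 1)) * 2 := by
      rw [← pow_succ]; congr 1; omega
    rw [BSMoff, show β - ℓ - 1 = β - (ℓ + 1) by omega]
    split_ifs <;> omega

theorem BSMprice_nonneg (hbnn : ∀ j < 2 ^ β, 0 ≤ b j) (r : B → ℕ) (ℓ : ℕ) (e : ι) :
    0 ≤ BSMprice Dem N r b β ℓ e := by
  unfold BSMprice
  split_ifs with hℓ
  · have := BSMoff_add_two_pow_le Dem N b β r e ℓ hℓ.le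
    have : 2 ^ (β - ℓ - 1) < 2 ^ (β - ℓ) := Nat.pow_lt_pow_right one_lt_two (by omega)
    exact hbnn _ (by omega)
  · have := BSMoff_add_two_pow_le Dem N b β r e β le_rfl
    exact hbnn _ (by simp at this; omega)

theorem sum_le_BSMrev (hbnn : ∀ j < 2 ^ β, 0 ≤ b j) {r : B → ℕ} {ℓ : ℕ} {S T : Finset ι}
    {x : ι → ℝ} (hT : T ⊆ S)
    (hx : ∀ e ∈ T, x e ≤ BSMprice Dem N r b β ℓ e ∧ e ∈ BSMsold Dem N r b β ℓ) :
    ∑ e ∈ T, x e ≤ BSMrev Dem N r b β S ℓ :=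
  calc ∑ e ∈ T, x e ≤ ∑ e ∈ T, BSMprice Dem N r b β ℓ e :=
      sum_le_sum fun e he => (hx e he).1
    _ ≤ BSMrev Dem N r b β S ℓ :=
      sum_le_sum_of_subset_of_nonneg (fun e he => mem_inter.2 ⟨hT he, (hx e he).2⟩)
        fun e _ _ => BSMprice_nonneg Dem N b β hbnn r ℓ e

theorem BSMrev_nonneg (hbnn : ∀ j < 2 ^ β, 0 ≤ b j) (r : B → ℕ) (S : Finset ι) (ℓ : ℕ) :
    0 ≤ BSMrev Dem N r b β S ℓ :=
  sum_nonneg fun e _ => BSMprice_nonneg Dem N b β hbnn r ℓ e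

theorem BSMoff_succ (r : B → ℕ) {ℓ : ℕ} (hℓ : ℓ < β) (e : ι) :
    BSMoff Dem N r b β (ℓ + 1) e =
      if e ∈ BSMsold Dem N r b β ℓ then BSMoff Dem N r b β ℓ e + 2 ^ (β - ℓ - 1)
      else BSMoff Dem N r b β ℓ e := by
  have hprice : (fun e' => b (BSMoff Dem N r b β ℓ e' + 2 ^ (β - ℓ - 1)))
      = BSMprice Dem N r b β ℓ := by
    funext e'; simp [BSMprice, hℓ]
  simp only [BSMoff, BSMsold, hprice]
  rfl

theorem BSM_binary_search (hbmono : ∀ j k : ℕ, j < k → k < 2 ^ β → b j < b k)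
    (r : B → ℕ) (e : ι) {j : ℕ} (hj : j < 2 ^ β) :
    (∃ ℓ < β, (BSMprice Dem N r b β ℓ e ≤ b j ∧ e ∉ BSMsold Dem N r b β ℓ) ∨
        (b j ≤ BSMprice Dem N r b β ℓ e ∧ e ∈ BSMsold Dem N r b β ℓ)) ∨
      BSMprice Dem N r b β β e = b j := by
  by_contra! hnot
  obtain ⟨hrounds, hlast⟩ := hnot
  have hle : ∀ k k', k ≤ k' → k' < 2 ^ β → b k ≤ b k' := fun k k' h hk' => by
    rcases h.lt_or_eq with h | rfl
    exacts [(hbmono k k' h hk').le, le_rfl]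
  -- Otherwise the remaining block `[off ℓ, off ℓ + 2^(β-ℓ))` of `e` contains `j` in every round.
  have hinv : ∀ ℓ ≤ β,
      BSMoff Dem N r b β ℓ e ≤ j ∧ j < BSMoff Dem N r b β ℓ e + 2 ^ (β - ℓ) := by
    intro ℓ hℓ
    induction ℓ with
    | zero => simpa [BSMoff] using hj
    | succ ℓ ih =>
      obtain ⟨h1, h2⟩ := ih (by omega)
      have hbound := BSMoff_add_two_pow_le Dem N b β r e ℓ (by omega)
      have hpow : 2 ^ (β - ℓ) = 2 ^ (β - ℓ - 1) * 2 := by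
        rw [← pow_succ]; congr 1; omega
      have hprice :
          BSMprice Dem N r b β ℓ e = b (BSMoff Dem N r b β ℓ e + 2 ^ (β - ℓ - 1)) := by
        simp [BSMprice, show ℓ < β by omega]
      obtain ⟨hunsold, hsold⟩ := hrounds ℓ (by omega)
      rw [BSMoff_succ Dem N b β r (by omega), show β - (ℓ + 1) = β - ℓ - 1 by omega]
      split_ifs with hs
      · have : ¬ j ≤ BSMoff Dem N r b β ℓ e + 2 ^ (β - ℓ - 1) := fun hjm =>
          hsold (hprice ▸ hle _ _ hjm (by omega)) hs
        omega
      · have : ¬ BSMoff Dem N r b β ℓ e + 2 ^ (β - ℓ - 1) ≤ j := fun hmj =>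
          hs (hunsold (hprice ▸ hle _ _ hmj hj))
        omega
  have hfinal := hinv β le_rfl
  exact hlast (by simp only [BSMprice, lt_irrefl, if_false]; congr 1; simp at hfinal; omega)

theorem BSMoff_congr {r r' : B → ℕ} : ∀ {ℓ : ℕ},
    (∀ ℓ' < ℓ, BSMgroup N r ℓ' = BSMgroup N r' ℓ') →
      BSMoff Dem N r b β ℓ = BSMoff Dem N r' b β ℓ
  | 0, _ => rfl
  | ℓ + 1, h => by
    have ih := BSMoff_congr (ℓ := ℓ) fun ℓ' hℓ' => h ℓ' (by omega)
    funext e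
    simp only [BSMoff, ih, h ℓ (by omega)]

theorem BSMprice_congr {r r' : B → ℕ} {ℓ : ℕ}
    (h : ∀ ℓ' < ℓ, BSMgroup N r ℓ' = BSMgroup N r' ℓ') :
    BSMprice Dem N r b β ℓ = BSMprice Dem N r' b β ℓ := by
  funext e
  unfold BSMprice
  split_ifs with hℓ
  · rw [BSMoff_congr Dem N b β h]
  · rw [BSMoff_congr Dem N b β fun ℓ' hℓ' => h ℓ' (by omega)]

theorem BSMsold_congr {r r' : B → ℕ} {ℓ : ℕ}
    (h : ∀ ℓ' ≤ ℓ, BSMgroup N r ℓ' = BSMgroup N r' ℓ') :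
    BSMsold Dem N r b β ℓ = BSMsold Dem N r' b β ℓ := by
  unfold BSMsold
  rw [BSMprice_congr Dem N b β fun ℓ' h' => h ℓ' h'.le, h ℓ le_rfl]

variable [DecidableEq B]

def BSMavail (r : B → ℕ) (ℓ : ℕ) (i : B) : Finset ι :=
  FPAavail (fun j => Dem j (BSMprice Dem N r b β ℓ)) (BSMgroup N r ℓ) univ i

variable {i : B} {r r' : B → ℕ} {ℓ : ℕ}

theorem BSMgroup_eq_of_ne (hr : ∀ j ≠ i, r j = r' j) (h : r i ≠ ℓ) (h' : r' i ≠ ℓ) :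
    BSMgroup N r ℓ = BSMgroup N r' ℓ := by
  unfold BSMgroup
  refine List.filter_congr fun j _ => ?_
  by_cases hj : j = i
  · subst hj; simp [h, h']
  · simp [hr j hj]

theorem BSMgroup_filter_ne (hr : ∀ j ≠ i, r j = r' j) (h' : r' i ≠ ℓ) :
    (BSMgroup N r ℓ).filter (· ≠ i) = BSMgroup N r' ℓ := by
  unfold BSMgroup
  rw [List.filter_filter]
  refine List.filter_congr fun j _ => ?_
  by_cases hj : j = i
  · subst hj; simp [h']
  · simp [hj, hr j hj]

theorem BSMprice_eq_of_le (hr : ∀ j ≠ i, r j = r' j) (h : ℓ ≤ r i) (h' : ℓ ≤ r' i) :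
    BSMprice Dem N r b β ℓ = BSMprice Dem N r' b β ℓ :=
  BSMprice_congr Dem N b β fun _ hℓ' => BSMgroup_eq_of_ne N hr (by omega) (by omega)

/-- Rounds before `ℓ` have the same bidders in both runs, so the prices of round `ℓ` agree, and
round `ℓ` of `r'` is round `ℓ` of `r` without `i`. -/
theorem compl_BSMavail_subset_BSMsold (hr : ∀ j ≠ i, r j = r' j) (h : r i = ℓ)
    (h' : ℓ ≤ r' i) : univ \ BSMavail Dem N b β r ℓ i ⊆ BSMsold Dem N r' b β ℓ := by
  rcases h'.lt_or_eq with hlt | heq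
  · unfold BSMavail BSMsold
    rw [BSMprice_eq_of_le Dem N b β hr h.ge h', ← BSMgroup_filter_ne N hr hlt.ne']
    exact sdiff_FPAavail_subset_FPAsold_filter _ i _ _
  · obtain rfl : r = r' := funext fun j => if hj : j = i then hj ▸ h.trans heq else hr j hj
    exact sdiff_FPAavail_subset_FPAsold _ i _ _

theorem BSMutility_ge {v : B → Finset ι → ℝ} (hDem : ∀ p, IsDemandOracle (v i) p (Dem i p))
    (hi : i ∈ N) (hri : r i = ℓ) {X : Finset ι} (hX : X ⊆ BSMavail Dem N b β r ℓ i) :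
    v i X - priceOf (BSMprice Dem N r b β ℓ) X ≤ BSMutility v Dem N r b β i ℓ := by
  have halloc : BSMfinalAlloc Dem N r b β ℓ i
      = Dem i (BSMprice Dem N r b β ℓ) (BSMavail Dem N b β r ℓ i) :=
    FPAalloc_eq_of_mem _ i (List.mem_filter.2 ⟨hi, by simpa using hri⟩)
  rw [BSMutility, if_pos hri, halloc]
  exact (hDem _ _).2 X hX

theorem BSMutility_nonneg {v : B → Finset ι → ℝ}
    (hDem : ∀ p, IsDemandOracle (v i) p (Dem i p))
    (h0 : v i ∅ = 0) (hi : i ∈ N) (r : B → ℕ) (ℓ : ℕ) :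
    0 ≤ BSMutility v Dem N r b β i ℓ := by
  by_cases hri : r i = ℓ
  · simpa [h0, priceOf] using BSMutility_ge Dem N b β hDem hi hri (empty_subset _)
  · simp [BSMutility, hri]

theorem exists_round_sold_or_avail (hbmono : ∀ j k : ℕ, j < k → k < 2 ^ β → b j < b k)
    (rminus : B → Fin (β + 1)) (i : B) (e : ι) {j : ℕ} (hj : j < 2 ^ β) :
    ∃ ℓ : Fin (β + 1),
      (b j ≤ BSMprice Dem N (roundsWith rminus i (Fin.last β)) b β ℓ e ∧
          e ∈ BSMsold Dem N (roundsWith rminus i (Fin.last β)) b β ℓ) ∨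
        (BSMprice Dem N (roundsWith rminus i ℓ) b β ℓ e ≤ b j ∧
          e ∈ BSMavail Dem N b β (roundsWith rminus i ℓ) ℓ i) := by
  set rlast := roundsWith rminus i (Fin.last β)
  have hr : ∀ k : Fin (β + 1), ∀ j ≠ i, roundsWith rminus i k j = rlast j :=
    fun k j hj => by simp [rlast, roundsWith, Function.update_of_ne hj]
  have hki : ∀ k : Fin (β + 1), roundsWith rminus i k i = k := fun k => by simp [roundsWith]
  have hlast : rlast i = β := hki _
  have havail : ∀ k : Fin (β + 1), e ∉ BSMsold Dem N rlast b β k →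
      e ∈ BSMavail Dem N b β (roundsWith rminus i k) k i := fun k hk => by
    by_contra h
    exact hk (compl_BSMavail_subset_BSMsold Dem N b β (hr k) (hki k) (by omega)
      (mem_sdiff.2 ⟨mem_univ e, h⟩))
  rcases BSM_binary_search Dem N b β hbmono rlast e hj with
    ⟨ℓ, hℓ, ⟨hprice, hunsold⟩ | hsold⟩ | hfinal
  · refine ⟨⟨ℓ, by omega⟩, Or.inr ⟨?_, havail _ hunsold⟩⟩
    rwa [BSMprice_eq_of_le Dem N b β (hr _) (hki _).ge (by simp [hlast]; omega)]
  · exact ⟨⟨ℓ, by omega⟩, Or.inl hsold⟩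
  · by_cases hs : e ∈ BSMsold Dem N rlast b β β
    · exact ⟨Fin.last β, Or.inl ⟨hfinal.ge, hs⟩⟩
    · exact ⟨Fin.last β, Or.inr ⟨hfinal.le, havail _ hs⟩⟩

theorem exists_revenue_utility_split {v : B → Finset ι → ℝ}
    (hbmono : ∀ j k : ℕ, j < k → k < 2 ^ β → b j < b k) (hbnn : ∀ j < 2 ^ β, 0 ≤ b j)
    (hDem : ∀ p, IsDemandOracle (v i) p (Dem i p)) (hi : i ∈ N) (rminus : B → Fin (β + 1))
    {S : Finset ι} {x : ι → ℝ} (hx : ∀ e ∈ S, ∃ j < 2 ^ β, b j = x e) :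
    ∃ T ⊆ S, ∃ c : ι → Fin (β + 1),
      ∑ e ∈ T, x e ≤
          ∑ k : Fin (β + 1), BSMrev Dem N (roundsWith rminus i (Fin.last β)) b β S k ∧
      ∀ k, ∀ X ⊆ S \ T, (∀ e ∈ X, c e = k) →
        v i X - priceOf x X ≤ BSMutility v Dem N (roundsWith rminus i k) b β i k := by
  choose! jx hjx hbjx using hx
  choose! c hc using fun e (he : e ∈ S) =>
    exists_round_sold_or_avail Dem N b β hbmono rminus i e (hjx e he)
  set rlast := roundsWith rminus i (Fin.last β)
  refine ⟨S.filter fun e => b (jx e) ≤ BSMprice Dem N rlast b β (c e) e ∧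
      e ∈ BSMsold Dem N rlast b β (c e), filter_subset _ _, c, ?_, ?_⟩
  · refine (sum_fiberwise _ c x).ge.trans <| sum_le_sum fun k _ => sum_le_BSMrev Dem N b β hbnn
      ((filter_subset _ _).trans (filter_subset _ _)) fun e he => ?_
    simp only [mem_filter] at he
    obtain ⟨⟨heS, hsold⟩, rfl⟩ := he
    rwa [← hbjx e heS]
  · intro k X hX hcX
    have havail : ∀ e ∈ X, BSMprice Dem N (roundsWith rminus i k) b β k e ≤ x e ∧
        e ∈ BSMavail Dem N b β (roundsWith rminus i k) k i := by
      intro e he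
      obtain ⟨heS, heT⟩ := mem_sdiff.1 (hX he)
      have := (hc e heS).resolve_left fun h => heT (mem_filter.2 ⟨heS, h⟩)
      rwa [hcX e he, hbjx e heS] at this
    calc v i X - priceOf x X
        ≤ v i X - priceOf (BSMprice Dem N (roundsWith rminus i k) b β k) X :=
          sub_le_sub_left (sum_le_sum fun e he => (havail e he).1) _
      _ ≤ _ := BSMutility_ge Dem N b β hDem hi (by simp [roundsWith])
          fun e he => (havail e he).2

theorem BSM_sum_utility_add_sum_revenue_ge {v : B → Finset ι → ℝ} {ψ α : ℝ}
    {S : Finset ι}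
    (hm : 2 ≤ Fintype.card ι) (hv : IsValuation (v i)) (hsub : SubadditiveVal (v i))
    (hψpos : 0 < ψ) (hψ : v i S ≤ ψ) (hα : 1 ≤ α) (hguar : PriceGuarantee (v i) S α)
    (hbmono : ∀ j k : ℕ, j < k → k < 2 ^ β → b j < b k) (hbnn : ∀ j < 2 ^ β, 0 ≤ b j)
    (hbB : ∀ x ∈ candB (Fintype.card ι) ψ, ∃ j < 2 ^ β, b j = x)
    (hDem : ∀ p, IsDemandOracle (v i) p (Dem i p)) (hi : i ∈ N) (rminus : B → Fin (β + 1)) :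
    1 / (2 * α) * v i S - ψ / (Fintype.card ι : ℝ) ^ 2 ≤
      ∑ k : Fin (β + 1), BSMutility v Dem N (roundsWith rminus i k) b β i k
        + ∑ k : Fin (β + 1), BSMrev Dem N (roundsWith rminus i (Fin.last β)) b β S k := by
  obtain ⟨h0, hmono⟩ := hv
  obtain ⟨q, hq0, hq⟩ := hguar.exists_prices h0 hsub
  choose! x hxB hx using fun e (he : e ∈ S) => exists_mem_candB_round_down hm hψpos (hq0 e he)
  obtain ⟨T, hTS, c, hrev, hutil⟩ := exists_revenue_utility_split Dem N b β hbmono hbnn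
    hDem hi rminus fun e he => hbB _ (hxB e he)
  have hU := hq T hTS c _ fun k X hX hcX => (sub_le_sub_left (sum_le_sum fun e he =>
    (hx e (mem_sdiff.1 (hX he)).1).2.1) _).trans (hutil k X hX hcX)
  have hgap : (T.card : ℝ) * (ψ / 2 ^ (3 * Nat.clog 2 (Fintype.card ι)))
      ≤ ψ / (Fintype.card ι : ℝ) ^ 2 :=
    (mul_le_mul_of_nonneg_right (by exact_mod_cast card_le_univ T) (by positivity)).trans
      (natCast_mul_div_two_pow_clog_le _ hψpos.le)
  have := le_utility_add_revenue hα (by simpa [h0] using hmono ∅ S (empty_subset _)) hψ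
    (by positivity) (fun e he => ⟨(hx e (hTS he)).1, (hx e (hTS he)).2.2⟩)
    (sum_nonneg fun k _ => BSMutility_nonneg Dem N b β hDem h0 hi _ _) hU hrev
  linarith

end BinarySearchMechanism

end

theorem binarySearchMechanism_utility_plus_revenue_general
    {ι : Type} [Fintype ι] [DecidableEq ι] (n β : ℕ) (ψ α : ℝ)
    (v : Fin n → Finset ι → ℝ)
    (Dem : Fin n → (ι → ℝ) → Finset ι → Finset ι)
    (b : ℕ → ℝ) (Sstar : Finset ι) (i₀ : Fin n) (rminus : Fin n → Fin (β + 1))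
    (hm : 2 ≤ Fintype.card ι)
    (hval : ∀ i, IsValuation (v i))
    (hsub : SubadditiveVal (v i₀))
    (hψpos : 0 < ψ)
    (hψ : v i₀ Sstar ≤ ψ)
    (hα : 1 ≤ α)
    (hguar : PriceGuarantee (v i₀) Sstar α)
    (hbmono : ∀ j k : ℕ, j < k → k < 2 ^ β → b j < b k)
    (hbnn : ∀ j < 2 ^ β, 0 ≤ b j)
    (hbB : ∀ x ∈ candB (Fintype.card ι) ψ, ∃ j < 2 ^ β, b j = x)
    (hDem : ∀ i p, IsDemandOracle (v i) p (Dem i p)) :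
    (((β : ℝ) + 1) ^ 2)⁻¹ *
        ∑ ri : Fin (β + 1), ∑ rs : Fin (β + 1),
          (BSMutility v Dem (List.finRange n)
              (fun j => ((Function.update rminus i₀ ri) j : ℕ)) b β i₀ (rs : ℕ)
            + BSMrev Dem (List.finRange n)
                (fun j => ((Function.update rminus i₀ ri) j : ℕ)) b β Sstar (rs : ℕ))
      ≥ (1 / (2 * α * ((β : ℝ) + 1) ^ 2)) * v i₀ Sstar
          - ψ / (Fintype.card ι : ℝ) ^ 2 := by
  have hc : 1 ≤ ((β : ℝ) + 1) ^ 2 := one_le_pow₀ (le_add_of_nonneg_left β.cast_nonneg)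
  have hgrid := sum_diag_add_sum_row_le
    (f := fun ri rs : Fin (β + 1) =>
      BSMutility v Dem (List.finRange n) (roundsWith rminus i₀ ri) b β i₀ rs)
    (g := fun ri rs : Fin (β + 1) =>
      BSMrev Dem (List.finRange n) (roundsWith rminus i₀ ri) b β Sstar rs)
    (fun _ _ => BSMutility_nonneg Dem _ b β (hDem i₀) (hval i₀).1 (List.mem_finRange i₀) _ _)
    (fun _ _ => BSMrev_nonneg Dem _ b β hbnn _ _ _) (Fin.last β)
  refine le_trans ?_ (mul_le_mul_of_nonneg_left hgrid (by positivity))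
  exact one_div_mul_sub_le_inv_mul hc (by positivity) <|
    BSM_sum_utility_add_sum_revenue_ge Dem _ b β hm (hval i₀) hsub hψpos hψ hα hguar hbmono
      hbnn hbB (hDem i₀) (List.mem_finRange i₀) rminus

/-- **Proposition 4.1** (per-bidder guarantee in `BinarySearchMechanism(N, M, ψ)`).
Items are the elements of the finite type `ι` (`M = univ`, `m = card ι ≥ 2`); bidders are
`0, …, n-1` in this order with (normalized, monotone) valuations `v i` and demand oracles
`Dem i p`; `b 0 < ⋯ < b (2^β - 1)` is the enlarged candidate price set `B' ⊇ B`.  Fix a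
bidder `i₀` with subadditive valuation, a set `Sstar ⊆ M`, and `ψ > 0` with
`ψ ≥ v_{i₀}(Sstar)`, and assume `i₀` satisfies the `α`-price guarantee on `Sstar`.  For
every fixed assignment `rminus` of rounds to the other bidders, the conditional
expectation over `r_{i₀}` and `r*` of `Utility_{i₀} + Rev(Sstar)` in the fixed price
auction producing the final allocation is at least
`(1/(2·α·(β+1)²))·v_{i₀}(Sstar) − ψ/m²`. -/
theorem binarySearchMechanism_utility_plus_revenue
    {ι : Type} [Fintype ι] [DecidableEq ι] (n β : ℕ) (ψ α : ℝ)
    (v : Fin n → Finset ι → ℝ)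
    (Dem : Fin n → (ι → ℝ) → Finset ι → Finset ι)
    (b : ℕ → ℝ) (Sstar : Finset ι) (i₀ : Fin n) (rminus : Fin n → Fin (β + 1))
    (hm : 2 ≤ Fintype.card ι)
    (hval : ∀ i, IsValuation (v i))
    (hsub : SubadditiveVal (v i₀))
    (hψpos : 0 < ψ)
    (hψ : v i₀ Sstar ≤ ψ)
    (hα : 1 ≤ α)
    (hguar : PriceGuarantee (v i₀) Sstar α)
    (hβ : 1 ≤ β)
    (hbmono : ∀ j k : ℕ, j < k → k < 2 ^ β → b j < b k)
    (hbnn : ∀ j < 2 ^ β, 0 ≤ b j)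
    (hbB : ∀ x ∈ candB (Fintype.card ι) ψ, ∃ j < 2 ^ β, b j = x)
    (hDem : ∀ i p, IsDemandOracle (v i) p (Dem i p)) :
    (((β : ℝ) + 1) ^ 2)⁻¹ *
        ∑ ri : Fin (β + 1), ∑ rs : Fin (β + 1),
          (BSMutility v Dem (List.finRange n)
              (fun j => ((Function.update rminus i₀ ri) j : ℕ)) b β i₀ (rs : ℕ)
            + BSMrev Dem (List.finRange n)
                (fun j => ((Function.update rminus i₀ ri) j : ℕ)) b β Sstar (rs : ℕ))
      ≥ (1 / (2 * α * ((β : ℝ) + 1) ^ 2)) * v i₀ Sstar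
          - ψ / (Fintype.card ι : ℝ) ^ 2 :=
  binarySearchMechanism_utility_plus_revenue_general n β ψ α v Dem b Sstar i₀ rminus hm hval hsub
    hψpos hψ hα hguar hbmono hbnn hbB hDem
end

section
/- Let β ≥ 1 be an integer, b_1 < b_2 < … < b_{2^β} strictly increasing reals, and E_1, …, E_β Boolean values. Define index blocks recursively: I_1 = {1, …, 2^β}; given that I_ℓ is a block of k = 2^{β−ℓ+1} consecutive indices, let p^{(ℓ)} = b_j where j is the (k/2+1)-st smallest index of I_ℓ, and let I_{ℓ+1} be the upper half of I_ℓ (its k/2 largest indices) if E_ℓ is true and the lower half (its k/2 smallest indices) otherwise; let p^{(β+1)} = b_j for the unique index j of I_{β+1}. Then for every index j ∈ {1, …, 2^β}, exactly one of the following holds: (i) p^{(β+1)} = b_j; (ii) there is a round ℓ ∈ {1, …, β} with j ∈ I_ℓ, E_ℓ true and p^{(ℓ)} > b_j, and in this case p^{(β+1)} > b_j; (iii) there is a round ℓ ∈ {1, …, β} with j ∈ I_ℓ, E_ℓ false and p^{(ℓ)} ≤ b_j, and in this case p^{(β+1)} < b_j. -/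
/-!
An index `j` other than the final one is eliminated in the first round whose kept half
misses it: it lies below the middle index if the upper half is kept, at or above it otherwise.
The final index lies in every block, hence in the kept half of any round, so in every round
where (ii) holds it is above `j` and in every round where (iii) holds it is below `j`.
Strict monotonicity of `b` turns these index comparisons into price comparisons.
-/

open Set

/-- The offset (smallest index, `0`-indexed) of the block `I_ℓ` of remaining indices of a
binary search over `2^β` sorted values: start with the full range; in round `ℓ`
(`0`-indexed, `ℓ = 0, …, β-1`) keep the upper half if `E ℓ` is true and the lower half
otherwise.  The block at stage `ℓ` is `{bsOff E β ℓ, …, bsOff E β ℓ + 2^(β-ℓ) - 1}`. -/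
def bsOff (E : ℕ → Bool) (β : ℕ) : ℕ → ℕ
  | 0 => 0
  | ℓ + 1 => bsOff E β ℓ + if E ℓ then 2 ^ (β - ℓ - 1) else 0

theorem Nat.exists_lt_and_not_succ {P : ℕ → Prop} {n : ℕ} (h0 : P 0) (hn : ¬P n) :
    ∃ k < n, P k ∧ ¬P (k + 1) := by
  by_contra! h
  suffices ∀ k ≤ n, P k from hn (this n le_rfl)
  intro k hk
  induction k with
  | zero => exact h0
  | succ k ih => exact h k (by omega) (ih (by omega))

namespace BinarySearch

variable (E : ℕ → Bool) (β : ℕ)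

def block (ℓ : ℕ) : Set ℕ := Ico (bsOff E β ℓ) (bsOff E β ℓ + 2 ^ (β - ℓ))

/-- The first index of the upper half of `block E β ℓ`, whose price is `p^{(ℓ)}`. -/
def mid (ℓ : ℕ) : ℕ := bsOff E β ℓ + 2 ^ (β - ℓ - 1)

/- Conditions (ii) and (iii) of the trichotomy, without their conclusions.  At `b = id` they
compare indices instead of prices. -/

def RejectedLow {α : Type*} [Preorder α] (b : ℕ → α) (j : ℕ) : Prop :=
  ∃ ℓ < β, j ∈ block E β ℓ ∧ E ℓ = true ∧ b j < b (mid E β ℓ)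

def RejectedHigh {α : Type*} [Preorder α] (b : ℕ → α) (j : ℕ) : Prop :=
  ∃ ℓ < β, j ∈ block E β ℓ ∧ E ℓ = false ∧ b (mid E β ℓ) ≤ b j

variable {E β}

theorem block_succ {ℓ : ℕ} (hℓ : ℓ < β) : block E β (ℓ + 1) =
    if E ℓ then Ico (mid E β ℓ) (bsOff E β ℓ + 2 ^ (β - ℓ)) else Ico (bsOff E β ℓ) (mid E β ℓ) := by
  have hhalf : 2 ^ (β - ℓ) = 2 ^ (β - ℓ - 1) + 2 ^ (β - ℓ - 1) := by
    rw [← two_mul, ← pow_succ']; congr 1; omega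
  rw [block, bsOff, ← Nat.sub_sub, mid]
  cases E ℓ
  · simp
  · simp only [if_true]; congr 1; omega

theorem block_succ_subset {ℓ : ℕ} (hℓ : ℓ < β) : block E β (ℓ + 1) ⊆ block E β ℓ := by
  rw [block_succ hℓ, block]
  split_ifs
  · exact Ico_subset_Ico_left (Nat.le_add_right _ _)
  · refine Ico_subset_Ico_right (Nat.add_le_add_left ?_ _)
    exact Nat.pow_le_pow_right (by norm_num) (by omega)

theorem mem_block_succ_iff {ℓ j : ℕ} (hℓ : ℓ < β) (hj : j ∈ block E β ℓ) :
    j ∈ block E β (ℓ + 1) ↔ (mid E β ℓ ≤ j ↔ E ℓ = true) := by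
  rw [block_succ hℓ]
  obtain ⟨hlo, hhi⟩ := hj
  cases E ℓ <;> simp [hlo, hhi]

theorem block_subset_block {ℓ m : ℕ} (hℓm : ℓ ≤ m) (hm : m ≤ β) :
    block E β m ⊆ block E β ℓ := by
  induction m, hℓm using Nat.le_induction with
  | base => exact subset_rfl
  | succ m _ ih => exact (block_succ_subset (by omega)).trans (ih (by omega))

theorem block_zero : block E β 0 = Iio (2 ^ β) := by
  ext j; simp [block, bsOff]

theorem mem_block_self_iff {j : ℕ} : j ∈ block E β β ↔ j = bsOff E β β := by
  simp only [block, Nat.sub_self, pow_zero, mem_Ico]; omega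

theorem bsOff_mem_block {ℓ : ℕ} (hℓ : ℓ ≤ β) : bsOff E β β ∈ block E β ℓ :=
  block_subset_block hℓ le_rfl (mem_block_self_iff.2 rfl)

theorem bsOff_lt_two_pow : bsOff E β β < 2 ^ β := by
  simpa [block_zero] using bsOff_mem_block (E := E) (Nat.zero_le β)

theorem mid_lt_two_pow {ℓ : ℕ} (hℓ : ℓ < β) : mid E β ℓ < 2 ^ β := by
  have hmid : mid E β ℓ ∈ block E β ℓ := by
    have : 0 < 2 ^ (β - ℓ - 1) := by positivity
    have : 2 ^ (β - ℓ - 1) < 2 ^ (β - ℓ) := Nat.pow_lt_pow_right (by norm_num) (by omega)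
    simp only [block, mid, mem_Ico]; omega
  simpa [block_zero] using block_subset_block (Nat.zero_le ℓ) hℓ.le hmid

theorem mid_le_bsOff_iff {ℓ : ℕ} (hℓ : ℓ < β) : mid E β ℓ ≤ bsOff E β β ↔ E ℓ = true :=
  (mem_block_succ_iff hℓ (bsOff_mem_block hℓ.le)).1 (bsOff_mem_block hℓ)

theorem lt_bsOff_of_rejectedLow {j : ℕ} (h : RejectedLow E β id j) : j < bsOff E β β := by
  obtain ⟨ℓ, hℓ, -, hE, hlt⟩ := h
  exact lt_of_lt_of_le hlt ((mid_le_bsOff_iff hℓ).2 hE)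

theorem bsOff_lt_of_rejectedHigh {j : ℕ} (h : RejectedHigh E β id j) : bsOff E β β < j := by
  obtain ⟨ℓ, hℓ, -, hE, hle⟩ := h
  have : ¬mid E β ℓ ≤ bsOff E β β := by simp [mid_le_bsOff_iff hℓ, hE]
  exact lt_of_lt_of_le (not_le.1 this) hle

theorem rejectedLow_or_rejectedHigh {j : ℕ} (hj : j < 2 ^ β) (hne : j ≠ bsOff E β β) :
    RejectedLow E β id j ∨ RejectedHigh E β id j := by
  obtain ⟨ℓ, hℓ, hin, hout⟩ := Nat.exists_lt_and_not_succ (P := (j ∈ block E β ·))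
    (by rwa [block_zero]) (mt mem_block_self_iff.1 hne)
  rw [mem_block_succ_iff hℓ hin] at hout
  cases hE : E ℓ
  · exact .inr ⟨ℓ, hℓ, hin, hE, by simpa [hE] using hout⟩
  · exact .inl ⟨ℓ, hℓ, hin, hE, by simpa [hE] using hout⟩

theorem rejectedLow_id_iff {j : ℕ} (hj : j < 2 ^ β) :
    RejectedLow E β id j ↔ j < bsOff E β β := by
  refine ⟨lt_bsOff_of_rejectedLow, fun hlt => ?_⟩
  refine (rejectedLow_or_rejectedHigh hj hlt.ne).resolve_right fun h => ?_
  exact lt_asymm hlt (bsOff_lt_of_rejectedHigh h)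

theorem rejectedHigh_id_iff {j : ℕ} (hj : j < 2 ^ β) :
    RejectedHigh E β id j ↔ bsOff E β β < j := by
  refine ⟨bsOff_lt_of_rejectedHigh, fun hlt => ?_⟩
  refine (rejectedLow_or_rejectedHigh hj hlt.ne').resolve_left fun h => ?_
  exact lt_asymm hlt (lt_bsOff_of_rejectedLow h)

variable {α : Type*} [Preorder α] {b : ℕ → α}

theorem rejectedLow_iff_of_strictMonoOn (hb : StrictMonoOn b (Iio (2 ^ β))) {j : ℕ}
    (hj : j < 2 ^ β) : RejectedLow E β b j ↔ RejectedLow E β id j := by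
  refine exists_congr fun ℓ => and_congr_right fun hℓ => and_congr_right' (and_congr_right' ?_)
  exact hb.lt_iff_lt hj (mid_lt_two_pow hℓ)

theorem rejectedHigh_iff_of_strictMonoOn (hb : StrictMonoOn b (Iio (2 ^ β))) {j : ℕ}
    (hj : j < 2 ^ β) : RejectedHigh E β b j ↔ RejectedHigh E β id j := by
  refine exists_congr fun ℓ => and_congr_right fun hℓ => and_congr_right' (and_congr_right' ?_)
  exact hb.le_iff_le (mid_lt_two_pow hℓ) hj

end BinarySearch

open BinarySearch in
theorem binary_search_trichotomy_general (β : ℕ) (b : ℕ → ℝ)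
    (hb : ∀ j k : ℕ, j < k → k < 2 ^ β → b j < b k) (E : ℕ → Bool) :
    ∀ j < 2 ^ β,
      ((b (bsOff E β β) = b j) ∧
        ¬(∃ ℓ < β, (bsOff E β ℓ ≤ j ∧ j < bsOff E β ℓ + 2 ^ (β - ℓ)) ∧
            E ℓ = true ∧ b j < b (bsOff E β ℓ + 2 ^ (β - ℓ - 1))) ∧
        ¬(∃ ℓ < β, (bsOff E β ℓ ≤ j ∧ j < bsOff E β ℓ + 2 ^ (β - ℓ)) ∧
            E ℓ = false ∧ b (bsOff E β ℓ + 2 ^ (β - ℓ - 1)) ≤ b j)) ∨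
      (¬(b (bsOff E β β) = b j) ∧
        (∃ ℓ < β, (bsOff E β ℓ ≤ j ∧ j < bsOff E β ℓ + 2 ^ (β - ℓ)) ∧
            E ℓ = true ∧ b j < b (bsOff E β ℓ + 2 ^ (β - ℓ - 1))) ∧
        ¬(∃ ℓ < β, (bsOff E β ℓ ≤ j ∧ j < bsOff E β ℓ + 2 ^ (β - ℓ)) ∧
            E ℓ = false ∧ b (bsOff E β ℓ + 2 ^ (β - ℓ - 1)) ≤ b j) ∧
        b j < b (bsOff E β β)) ∨
      (¬(b (bsOff E β β) = b j) ∧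
        ¬(∃ ℓ < β, (bsOff E β ℓ ≤ j ∧ j < bsOff E β ℓ + 2 ^ (β - ℓ)) ∧
            E ℓ = true ∧ b j < b (bsOff E β ℓ + 2 ^ (β - ℓ - 1))) ∧
        (∃ ℓ < β, (bsOff E β ℓ ≤ j ∧ j < bsOff E β ℓ + 2 ^ (β - ℓ)) ∧
            E ℓ = false ∧ b (bsOff E β ℓ + 2 ^ (β - ℓ - 1)) ≤ b j) ∧
        b (bsOff E β β) < b j) := by
  intro j hj
  have hmono : StrictMonoOn b (Iio (2 ^ β)) := fun x _ y hy hxy => hb x y hxy hy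
  have hf : bsOff E β β < 2 ^ β := bsOff_lt_two_pow
  have hlow : RejectedLow E β b j ↔ j < bsOff E β β :=
    (rejectedLow_iff_of_strictMonoOn hmono hj).trans (rejectedLow_id_iff hj)
  have hhigh : RejectedHigh E β b j ↔ bsOff E β β < j :=
    (rejectedHigh_iff_of_strictMonoOn hmono hj).trans (rejectedHigh_id_iff hj)
  rcases lt_trichotomy j (bsOff E β β) with hlt | rfl | hgt
  · have hbj := hmono hj hf hlt
    exact .inr (.inl ⟨hbj.ne', hlow.2 hlt, mt hhigh.1 hlt.not_gt, hbj⟩)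
  · exact .inl ⟨rfl, mt hlow.1 (lt_irrefl _), mt hhigh.1 (lt_irrefl _)⟩
  · have hbj := hmono hf hj hgt
    exact .inr (.inr ⟨hbj.ne, mt hlow.1 hgt.not_gt, hhigh.2 hgt, hbj⟩)

/-- **The binary-search price-elimination invariant.**  Let `b 0 < b 1 < ⋯ < b (2^β - 1)`
be strictly increasing reals (the candidate prices, `0`-indexed) and `E 0, …, E (β-1)`
Boolean values.  In round `ℓ` the middle price is `p^{(ℓ)} = b (bsOff E β ℓ + 2^(β-ℓ-1))`
(the `(k/2+1)`-st entry of the current block of length `k = 2^(β-ℓ)`), and the final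
price is `p^{(β+1)} = b (bsOff E β β)`.  Then for every index `j < 2^β` exactly one of
the following holds: (i) `p^{(β+1)} = b j`; (ii) there is a round `ℓ < β` with `j` in the
block `I_ℓ`, `E ℓ` true and `p^{(ℓ)} > b j` — and then `p^{(β+1)} > b j`; (iii) there is
a round `ℓ < β` with `j` in the block `I_ℓ`, `E ℓ` false and `p^{(ℓ)} ≤ b j` — and then
`p^{(β+1)} < b j`. -/
theorem binary_search_trichotomy (β : ℕ) (hβ : 1 ≤ β) (b : ℕ → ℝ)
    (hb : ∀ j k : ℕ, j < k → k < 2 ^ β → b j < b k) (E : ℕ → Bool) :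
    ∀ j < 2 ^ β,
      ((b (bsOff E β β) = b j) ∧
        ¬(∃ ℓ < β, (bsOff E β ℓ ≤ j ∧ j < bsOff E β ℓ + 2 ^ (β - ℓ)) ∧
            E ℓ = true ∧ b j < b (bsOff E β ℓ + 2 ^ (β - ℓ - 1))) ∧
        ¬(∃ ℓ < β, (bsOff E β ℓ ≤ j ∧ j < bsOff E β ℓ + 2 ^ (β - ℓ)) ∧
            E ℓ = false ∧ b (bsOff E β ℓ + 2 ^ (β - ℓ - 1)) ≤ b j)) ∨
      (¬(b (bsOff E β β) = b j) ∧
        (∃ ℓ < β, (bsOff E β ℓ ≤ j ∧ j < bsOff E β ℓ + 2 ^ (β - ℓ)) ∧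
            E ℓ = true ∧ b j < b (bsOff E β ℓ + 2 ^ (β - ℓ - 1))) ∧
        ¬(∃ ℓ < β, (bsOff E β ℓ ≤ j ∧ j < bsOff E β ℓ + 2 ^ (β - ℓ)) ∧
            E ℓ = false ∧ b (bsOff E β ℓ + 2 ^ (β - ℓ - 1)) ≤ b j) ∧
        b j < b (bsOff E β β)) ∨
      (¬(b (bsOff E β β) = b j) ∧
        ¬(∃ ℓ < β, (bsOff E β ℓ ≤ j ∧ j < bsOff E β ℓ + 2 ^ (β - ℓ)) ∧
            E ℓ = true ∧ b j < b (bsOff E β ℓ + 2 ^ (β - ℓ - 1))) ∧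
        (∃ ℓ < β, (bsOff E β ℓ ≤ j ∧ j < bsOff E β ℓ + 2 ^ (β - ℓ)) ∧
            E ℓ = false ∧ b (bsOff E β ℓ + 2 ^ (β - ℓ - 1)) ≤ b j) ∧
        b (bsOff E β β) < b j) :=
  binary_search_trichotomy_general β b hb E
end

section
/- Fix a finite set M of items, a price vector p, and for each bidder a valuation v_i and a fixed deterministic demand oracle D_i. Let L₁ and L₂ be lists of bidders and let i be a bidder not occurring in L₁ or L₂. Let X be the set of items of M that are not allocated in FixedPriceAuction(L₁ ++ L₂, M, p). Then in FixedPriceAuction(L₁ ++ [i] ++ L₂, M, p), every item of X is still available when bidder i is processed, and consequently bidder i's utility satisfies v_i(A_i) − p(A_i) ≥ v_i(T) − p(T) for every T ⊆ X, where A_i is the bundle bidder i receives. -/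
open Finset

variable {ι : Type} [Fintype ι] [DecidableEq ι] {B : Type} [DecidableEq B]

/-! Processing bidders before `i` does not involve `i`, so in the auction with `i` inserted,
`i` faces exactly the items left unsold by `L₁`; these include everything left unsold by
`L₁ ++ L₂`, and the demand oracle maximizes `i`'s utility over all of them. -/

variable {α β : Type} [DecidableEq α]

lemma FPAsold_subset_append (Dem : β → Finset α → Finset α) (L₁ L₂ : List β) (R : Finset α) :
    FPAsold Dem L₁ R ⊆ FPAsold Dem (L₁ ++ L₂) R := by
  induction L₁ generalizing R with
  | nil => exact empty_subset _
  | cons j L ih => exact union_subset_union subset_rfl (ih _)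

@[simp]
lemma FPAalloc_cons_self [DecidableEq β] (Dem : β → Finset α → Finset α) (i : β) (L : List β)
    (R : Finset α) :
    FPAalloc Dem (i :: L) R i = Dem i R := if_pos rfl

lemma FPAalloc_append_of_notMem [DecidableEq β] (Dem : β → Finset α → Finset α) {i : β}
    {L₁ : List β} (hi : i ∉ L₁) (L : List β) (R : Finset α) :
    FPAalloc Dem (L₁ ++ L) R i = FPAalloc Dem L (R \ FPAsold Dem L₁ R) i := by
  induction L₁ generalizing R with
  | nil => rw [List.nil_append, FPAsold, sdiff_empty]
  | cons j L₁ ih =>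
    obtain ⟨hij, hiL₁⟩ := not_or.mp (List.mem_cons.not.mp hi)
    rw [List.cons_append, FPAalloc, if_neg hij, ih hiL₁, FPAsold, sdiff_sdiff_left, sup_eq_union]

theorem fixedPriceAuction_insert_bidder_general
    {ι : Type} [Fintype ι] [DecidableEq ι] {B : Type} [DecidableEq B]
    (p : ι → ℝ) (v : B → Finset ι → ℝ) (Dem : B → Finset ι → Finset ι)
    (hDem : ∀ j, IsDemandOracle (v j) p (Dem j))
    (L₁ L₂ : List B) (i : B) (hi₁ : i ∉ L₁) :
    Finset.univ \ FPAsold Dem (L₁ ++ L₂) Finset.univ ⊆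
        Finset.univ \ FPAsold Dem L₁ Finset.univ ∧
    ∀ T ⊆ Finset.univ \ FPAsold Dem (L₁ ++ L₂) Finset.univ,
      v i T - priceOf p T ≤
        v i (FPAalloc Dem (L₁ ++ i :: L₂) Finset.univ i)
          - priceOf p (FPAalloc Dem (L₁ ++ i :: L₂) Finset.univ i) := by
  have hX : univ \ FPAsold Dem (L₁ ++ L₂) univ ⊆ univ \ FPAsold Dem L₁ univ :=
    sdiff_subset_sdiff subset_rfl (FPAsold_subset_append Dem L₁ L₂ univ)
  have hbundle : FPAalloc Dem (L₁ ++ i :: L₂) univ i = Dem i (univ \ FPAsold Dem L₁ univ) := by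
    rw [FPAalloc_append_of_notMem Dem hi₁, FPAalloc_cons_self]
  refine ⟨hX, fun T hT => ?_⟩
  rw [hbundle]
  exact (hDem i _).2 T (hT.trans hX)

/-- **Insertion property of the fixed price auction.**  Items are the elements of `ι`
(`M = univ`); prices `p`, valuations `v j` and demand oracles `Dem j` are fixed.  Let
`L₁, L₂` be lists of bidders and `i` a bidder not occurring in `L₁` or `L₂`, and let `X`
be the set of items not allocated in `FixedPriceAuction(L₁ ++ L₂, M, p)`.  Then in
`FixedPriceAuction(L₁ ++ [i] ++ L₂, M, p)` every item of `X` is still available when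
bidder `i` is processed (the available set is `univ \ FPAsold Dem L₁ univ`), and
consequently bidder `i`'s bundle `A_i` satisfies `v_i(A_i) − p(A_i) ≥ v_i(T) − p(T)` for
every `T ⊆ X`. -/
theorem fixedPriceAuction_insert_bidder
    {ι : Type} [Fintype ι] [DecidableEq ι] {B : Type} [DecidableEq B]
    (p : ι → ℝ) (v : B → Finset ι → ℝ) (Dem : B → Finset ι → Finset ι)
    (hp : ∀ e, 0 ≤ p e)
    (hval : ∀ j, IsValuation (v j))
    (hDem : ∀ j, IsDemandOracle (v j) p (Dem j))
    (L₁ L₂ : List B) (i : B) (hi₁ : i ∉ L₁) (hi₂ : i ∉ L₂) :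
    Finset.univ \ FPAsold Dem (L₁ ++ L₂) Finset.univ ⊆
        Finset.univ \ FPAsold Dem L₁ Finset.univ ∧
    ∀ T ⊆ Finset.univ \ FPAsold Dem (L₁ ++ L₂) Finset.univ,
      v i T - priceOf p T ≤
        v i (FPAalloc Dem (L₁ ++ i :: L₂) Finset.univ i)
          - priceOf p (FPAalloc Dem (L₁ ++ i :: L₂) Finset.univ i) :=
  fixedPriceAuction_insert_bidder_general p v Dem hDem L₁ L₂ i hi₁
end
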